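/- arXiv:1203.1066 — 6 statements merged into one kernel-verified Lean document; each statement's English description precedes it below -/
import Mathlib

section
/- Let E be a linear subspace of H that contains a unit vector. Then the torsion indicatrix Ω(E) is a compact subset of V, it is symmetric about the origin (Ω(E) = −Ω(E)), and it is star-shaped about the origin: 0 ∈ Ω(E) and t·ω ∈ Ω(E) for every ω ∈ Ω(E) and every t ∈ [0,1]. -/
/-- The torsion indicatrix `Ω(E₁,E₂)` of a bilinear map `T : H × H → V`:
the set of all values `T x y` with `x ∈ E₁`, `y ∈ E₂` unit vectors. -/
def torsionIndicatrix {H V : Type*} [NormedAddCommGroup H] [InnerProductSpace ℝ H]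
    [NormedAddCommGroup V] [NormedSpace ℝ V]
    (T : H →ₗ[ℝ] H →ₗ[ℝ] V) (E₁ E₂ : Submodule ℝ H) : Set V :=
  {v | ∃ x ∈ E₁, ∃ y ∈ E₂, ‖x‖ = 1 ∧ ‖y‖ = 1 ∧ T x y = v}

/-- If `E` is a subspace of `H` containing a unit vector, then the torsion indicatrix
`Ω(E)` is compact, symmetric about the origin, and star-shaped about the origin. -/
theorem torsionIndicatrix_isCompact_symmetric_starShaped
    {H V : Type*} [NormedAddCommGroup H] [InnerProductSpace ℝ H] [FiniteDimensional ℝ H]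
    [NormedAddCommGroup V] [NormedSpace ℝ V] [FiniteDimensional ℝ V]
    (T : H →ₗ[ℝ] H →ₗ[ℝ] V) (hskew : ∀ x y : H, T y x = -T x y)
    (E : Submodule ℝ H) (hE : ∃ x ∈ E, ‖x‖ = 1) :
    IsCompact (torsionIndicatrix T E E) ∧
      torsionIndicatrix T E E = -torsionIndicatrix T E E ∧
      (0 : V) ∈ torsionIndicatrix T E E ∧
      ∀ ω ∈ torsionIndicatrix T E E, ∀ t ∈ Set.Icc (0 : ℝ) 1,
        t • ω ∈ torsionIndicatrix T E E := by
  have hTxx : ∀ x : H, T x x = 0 := by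
    intro x
    have h := hskew x x
    have h2 : T x x + T x x = 0 := by nth_rewrite 2 [h]; simp
    have h3 : (2 : ℝ) • (T x x) = 0 := by rw [two_smul]; exact h2
    simpa using h3
  refine ⟨?_, ?_, ?_, ?_⟩
  · -- compactness
    -- Ω(E,E) is the image of a compact set under a continuous map
    have hS : IsCompact {x : H | x ∈ E ∧ ‖x‖ = 1} := by
      apply Metric.isCompact_of_isClosed_isBounded
      · exact IsClosed.inter (Submodule.closed_of_finiteDimensional E)
          (isClosed_eq continuous_norm continuous_const)
      · apply Bornology.IsBounded.subset (Metric.isBounded_closedBall (x := (0 : H)) (r := 1))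
        intro x hx
        simp [Metric.mem_closedBall, dist_eq_norm, hx.2]
    have hK : IsCompact ({x : H | x ∈ E ∧ ‖x‖ = 1} ×ˢ {x : H | x ∈ E ∧ ‖x‖ = 1}) :=
      hS.prod hS
    have hcont : Continuous (fun p : H × H => T p.1 p.2) := by
      have hc1 : Continuous (fun x : H => (T x).toContinuousLinearMap) :=
        LinearMap.continuous_of_finiteDimensional
          ((LinearMap.toContinuousLinearMap : (H →ₗ[ℝ] V) ≃ₗ[ℝ] (H →L[ℝ] V)).toLinearMap.comp T)
      exact (hc1.comp continuous_fst).clm_apply continuous_snd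
    have himg : torsionIndicatrix T E E =
        (fun p : H × H => T p.1 p.2) '' ({x : H | x ∈ E ∧ ‖x‖ = 1} ×ˢ {x : H | x ∈ E ∧ ‖x‖ = 1}) := by
      ext v
      constructor
      · rintro ⟨x, hx, y, hy, hnx, hny, hv⟩
        exact ⟨(x, y), ⟨⟨hx, hnx⟩, ⟨hy, hny⟩⟩, hv⟩
      · rintro ⟨⟨x, y⟩, ⟨⟨hx, hnx⟩, ⟨hy, hny⟩⟩, hv⟩
        exact ⟨x, hx, y, hy, hnx, hny, hv⟩
    rw [himg]
    exact hK.image hcont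
  · -- symmetry
    ext v
    simp only [Set.mem_neg]
    constructor
    · rintro ⟨x, hx, y, hy, hnx, hny, hv⟩
      exact ⟨y, hy, x, hx, hny, hnx, by rw [hskew x y, hv]⟩
    · rintro ⟨x, hx, y, hy, hnx, hny, hv⟩
      exact ⟨y, hy, x, hx, hny, hnx, by rw [hskew x y, hv, neg_neg]⟩
  · -- 0 ∈ Ω
    obtain ⟨x, hx, hnx⟩ := hE
    exact ⟨x, hx, x, hx, hnx, hnx, hTxx x⟩
  · -- star-shaped
    rintro ω ⟨x, hx, y, hy, hnx, hny, hv⟩ t ⟨ht0, ht1⟩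
    set c : ℝ := inner ℝ x y with hc
    have hdisc : (0 : ℝ) ≤ t ^ 2 * c ^ 2 + 1 - t ^ 2 := by nlinarith [sq_nonneg (t * c)]
    set s : ℝ := -(t * c) + Real.sqrt (t ^ 2 * c ^ 2 + 1 - t ^ 2) with hs
    have hsq : Real.sqrt (t ^ 2 * c ^ 2 + 1 - t ^ 2) ^ 2 = t ^ 2 * c ^ 2 + 1 - t ^ 2 :=
      Real.sq_sqrt hdisc
    refine ⟨x, hx, t • y + s • x, Submodule.add_mem E (Submodule.smul_mem E t hy)
      (Submodule.smul_mem E s hx), hnx, ?_, ?_⟩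
    · -- norm of t•y + s•x is 1
      have hnorm2 : ‖t • y + s • x‖ ^ 2 = 1 := by
        rw [← real_inner_self_eq_norm_sq]
        have hxx : (inner ℝ x x : ℝ) = 1 := by
          rw [real_inner_self_eq_norm_sq, hnx]; norm_num
        have hyy : (inner ℝ y y : ℝ) = 1 := by
          rw [real_inner_self_eq_norm_sq, hny]; norm_num
        have hyx : (inner ℝ y x : ℝ) = c := by rw [real_inner_comm]
        simp only [inner_add_add_self, real_inner_smul_left, real_inner_smul_right,
          hxx, hyy, hyx, ← hc]
        have hr : s + t * c = Real.sqrt (t ^ 2 * c ^ 2 + 1 - t ^ 2) := by rw [hs]; ring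
        have h1 : (s + t * c) ^ 2 = t ^ 2 * c ^ 2 + 1 - t ^ 2 := by rw [hr, hsq]
        linear_combination h1
      calc ‖t • y + s • x‖ = Real.sqrt (‖t • y + s • x‖ ^ 2) :=
            (Real.sqrt_sq (norm_nonneg _)).symm
        _ = 1 := by rw [hnorm2, Real.sqrt_one]
    · -- T x (t•y + s•x) = t • ω
      rw [map_add, map_smul, map_smul, hTxx x, smul_zero, add_zero, hv]
end

section
/- Suppose H decomposes as an orthogonal direct sum H = H₀ ⊕ H₁ ⊕ ⋯ ⊕ H_m with m ≥ 1, such that T(u,v) = 0 whenever u ∈ H_i and v ∈ H_j with i ≠ j, T vanishes identically on H₀ × H₀, and each H_i with 1 ≤ i ≤ m contains a unit vector. Then Ω(H) equals the convex sum 𝒞∑_{i=1}^m Ω(H_i) = {∑_{i=1}^m a_i ω_i : ω_i ∈ Ω(H_i), a_i ≥ 0 for all i, ∑_{i=1}^m a_i ≤ 1}. -/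
/-- The convex sum `𝒞∑ᵢ Δᵢ` of finitely many subsets of a vector space. -/
def convexSum {V : Type*} [AddCommGroup V] [Module ℝ V] {m : ℕ}
    (Δ : Fin m → Set V) : Set V :=
  {v | ∃ (a : Fin m → ℝ) (d : Fin m → V),
    (∀ i, d i ∈ Δ i) ∧ (∀ i, 0 ≤ a i) ∧ (∑ i, a i) ≤ 1 ∧ ∑ i, a i • d i = v}

section aux
variable {H V : Type*} [NormedAddCommGroup H] [InnerProductSpace ℝ H]
    [NormedAddCommGroup V] [NormedSpace ℝ V]

lemma Txx_zero (T : H →ₗ[ℝ] H →ₗ[ℝ] V) (hskew : ∀ x y : H, T y x = -T x y) (x : H) :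
    T x x = 0 := by
  have h := hskew x x
  have h2 : T x x + T x x = 0 := add_eq_zero_iff_eq_neg.mpr h
  have : (2 : ℝ) • T x x = 0 := by rw [two_smul]; exact h2
  simpa using (smul_eq_zero.mp this).resolve_left (by norm_num)

lemma normsq_sum {ι : Type*} [Fintype ι] (g : ι → H)
    (horth : ∀ i j, i ≠ j → (inner ℝ (g i) (g j) : ℝ) = 0) :
    ‖∑ i, g i‖ ^ 2 = ∑ i, ‖g i‖ ^ 2 := by
  rw [← real_inner_self_eq_norm_sq, sum_inner]
  refine Finset.sum_congr rfl fun i _ => ?_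
  rw [inner_sum, Finset.sum_eq_single i]
  · exact real_inner_self_eq_norm_sq _
  · intro j _ hj
    exact horth i j (Ne.symm hj)
  · intro h; exact absurd (Finset.mem_univ i) h

lemma star_lemma (T : H →ₗ[ℝ] H →ₗ[ℝ] V) (hskew : ∀ x y : H, T y x = -T x y)
    (x y : H) (hx : ‖x‖ = 1) (hy : ‖y‖ = 1) (t : ℝ) (ht0 : 0 ≤ t) (ht1 : t ≤ 1) :
    ∃ z : H, ‖z‖ = 1 ∧ T x z = t • T x y := by
  set c : ℝ := inner ℝ x y with hc
  have hrad : 0 ≤ t ^ 2 * c ^ 2 + 1 - t ^ 2 := by nlinarith [sq_nonneg (t * c)]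
  set σ : ℝ := -(t * c) + Real.sqrt (t ^ 2 * c ^ 2 + 1 - t ^ 2) with hσ
  have hsq : (σ + t * c) ^ 2 = t ^ 2 * c ^ 2 + 1 - t ^ 2 := by
    have h := Real.sq_sqrt hrad
    rw [hσ]; nlinarith [h]
  refine ⟨t • y + σ • x, ?_, ?_⟩
  · have h1 : ‖t • y + σ • x‖ ^ 2 = 1 := by
      rw [norm_add_sq_real, norm_smul, norm_smul, real_inner_smul_left, real_inner_smul_right]
      simp only [hx, hy, Real.norm_eq_abs, mul_one]
      rw [sq_abs, sq_abs, real_inner_comm, ← hc]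
      nlinarith [hsq]
    rw [← Real.sqrt_one, ← h1, Real.sqrt_sq (norm_nonneg _)]
  · simp [map_add, map_smul, Txx_zero T hskew]

end aux

/-- If `H` decomposes as an orthogonal direct sum `H₀ ⊕ H₁ ⊕ ⋯ ⊕ H_m` with `T` vanishing
on mixed blocks and on `H₀ × H₀`, and each `Hᵢ` (`1 ≤ i ≤ m`) contains a unit vector, then
the full torsion indicatrix `Ω(H)` equals the convex sum of the indicatrices `Ω(Hᵢ)`. -/
theorem torsionIndicatrix_eq_convexSum
    {H V : Type*} [NormedAddCommGroup H] [InnerProductSpace ℝ H] [FiniteDimensional ℝ H]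
    [NormedAddCommGroup V] [NormedSpace ℝ V] [FiniteDimensional ℝ V]
    (T : H →ₗ[ℝ] H →ₗ[ℝ] V) (hskew : ∀ x y : H, T y x = -T x y)
    (m : ℕ) (hm : 1 ≤ m) (Hsub : Fin (m + 1) → Submodule ℝ H)
    (horth : ∀ i j, i ≠ j → ∀ x ∈ Hsub i, ∀ y ∈ Hsub j, (inner ℝ x y : ℝ) = 0)
    (hspan : (⨆ i, Hsub i) = ⊤)
    (hTmixed : ∀ i j, i ≠ j → ∀ x ∈ Hsub i, ∀ y ∈ Hsub j, T x y = 0)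
    (hT00 : ∀ x ∈ Hsub 0, ∀ y ∈ Hsub 0, T x y = 0)
    (hunit : ∀ i : Fin m, ∃ x ∈ Hsub i.succ, ‖x‖ = 1) :
    torsionIndicatrix T ⊤ ⊤ =
      convexSum (fun i : Fin m => torsionIndicatrix T (Hsub i.succ) (Hsub i.succ)) := by
  ext v
  constructor
  · rintro ⟨x, -, y, -, hx, hy, rfl⟩
    -- decompose x and y
    have hxmem : x ∈ ⨆ i, Hsub i := by rw [hspan]; trivial
    have hymem : y ∈ ⨆ i, Hsub i := by rw [hspan]; trivial
    rw [Submodule.mem_iSup_iff_exists_finsupp] at hxmem hymem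
    obtain ⟨f, hf, hfx⟩ := hxmem
    obtain ⟨g, hg, hgy⟩ := hymem
    have hfx' : ∑ i, f i = x := by rw [← hfx, Finsupp.sum_fintype]; intro _; rfl
    have hgy' : ∑ i, g i = y := by rw [← hgy, Finsupp.sum_fintype]; intro _; rfl
    -- norm identities
    have hforth : ∀ i j, i ≠ j → (inner ℝ (f i) (f j) : ℝ) = 0 :=
      fun i j hij => horth i j hij _ (hf i) _ (hf j)
    have hgorth : ∀ i j, i ≠ j → (inner ℝ (g i) (g j) : ℝ) = 0 :=
      fun i j hij => horth i j hij _ (hg i) _ (hg j)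
    have hxn : ∑ i, ‖f i‖ ^ 2 = 1 := by
      rw [← normsq_sum f hforth, hfx', hx]; norm_num
    have hyn : ∑ i, ‖g i‖ ^ 2 = 1 := by
      rw [← normsq_sum g hgorth, hgy', hy]; norm_num
    -- T x y = diagonal sum
    have hTxy : T x y = ∑ i : Fin m, T (f i.succ) (g i.succ) := by
      rw [← hfx', ← hgy']
      simp only [map_sum, LinearMap.sum_apply]
      have hdiag : ∀ j : Fin (m+1), ∑ i, T (f i) (g j) = T (f j) (g j) := by
        intro j
        rw [Finset.sum_eq_single j]
        · intro i _ hi; exact hTmixed i j hi _ (hf i) _ (hg j)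
        · intro h; exact absurd (Finset.mem_univ j) h
      rw [Finset.sum_congr rfl fun j _ => hdiag j, Fin.sum_univ_succ,
        hT00 _ (hf 0) _ (hg 0), zero_add]
    refine ⟨fun i => ‖f i.succ‖ * ‖g i.succ‖, fun i =>
      if ‖f i.succ‖ * ‖g i.succ‖ = 0 then 0
      else T ((‖f i.succ‖⁻¹) • f i.succ) ((‖g i.succ‖⁻¹) • g i.succ), ?_, ?_, ?_, ?_⟩
    · intro i
      by_cases h : ‖f i.succ‖ * ‖g i.succ‖ = 0
      · simp only [h, if_true]
        obtain ⟨u, hu, hu1⟩ := hunit i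
        exact ⟨u, hu, u, hu, hu1, hu1, Txx_zero T hskew u⟩
      · simp only [h, if_false]
        have hf0 : ‖f i.succ‖ ≠ 0 := fun h0 => h (by rw [h0, zero_mul])
        have hg0 : ‖g i.succ‖ ≠ 0 := fun h0 => h (by rw [h0, mul_zero])
        refine ⟨_, Submodule.smul_mem _ _ (hf i.succ), _, Submodule.smul_mem _ _ (hg i.succ),
          ?_, ?_, rfl⟩
        · rw [norm_smul, norm_inv, norm_norm, inv_mul_cancel₀ hf0]
        · rw [norm_smul, norm_inv, norm_norm, inv_mul_cancel₀ hg0]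
    · intro i; positivity
    · -- Cauchy-Schwarz
      have hcs := Finset.sum_mul_sq_le_sq_mul_sq Finset.univ
        (fun i : Fin m => ‖f i.succ‖) (fun i : Fin m => ‖g i.succ‖)
      have h1 : ∑ i : Fin m, ‖f i.succ‖ ^ 2 ≤ 1 := by
        rw [← hxn, Fin.sum_univ_succ]; nlinarith [sq_nonneg ‖f 0‖]
      have h2 : ∑ i : Fin m, ‖g i.succ‖ ^ 2 ≤ 1 := by
        rw [← hyn, Fin.sum_univ_succ]; nlinarith [sq_nonneg ‖g 0‖]
      have hnn : (0:ℝ) ≤ ∑ i : Fin m, ‖f i.succ‖ * ‖g i.succ‖ :=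
        Finset.sum_nonneg fun i _ => by positivity
      nlinarith [hcs, Finset.sum_nonneg (fun i (_ : i ∈ Finset.univ) =>
        sq_nonneg ‖f (Fin.succ i)‖), Finset.sum_nonneg (fun i (_ : i ∈ Finset.univ) =>
        sq_nonneg ‖g (Fin.succ i)‖)]
    · rw [hTxy]
      refine Finset.sum_congr rfl fun i _ => ?_
      by_cases h : ‖f i.succ‖ * ‖g i.succ‖ = 0
      · simp only [h, if_true, smul_zero]
        rcases mul_eq_zero.mp h with h0 | h0
        · rw [norm_eq_zero.mp h0]; simp
        · rw [norm_eq_zero.mp h0]; simp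
      · simp only [h, if_false, map_smul, LinearMap.smul_apply, smul_smul]
        have hf0 : ‖f i.succ‖ ≠ 0 := fun h0 => h (by rw [h0, zero_mul])
        have hg0 : ‖g i.succ‖ ≠ 0 := fun h0 => h (by rw [h0, mul_zero])
        have hc : ‖f i.succ‖ * ‖g i.succ‖ * (‖g i.succ‖⁻¹ * ‖f i.succ‖⁻¹) = 1 := by
          field_simp
        rw [hc, one_smul]
  · rintro ⟨a, d, hd, ha0, has, rfl⟩
    choose xx hxmem yy hymem hxnorm hynorm hTd using hd
    set s : ℝ := ∑ i, a i with hs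
    by_cases hs0 : s = 0
    · have hall : ∀ i ∈ Finset.univ, a i = 0 :=
        (Finset.sum_eq_zero_iff_of_nonneg fun i _ => ha0 i).mp hs0
      obtain ⟨u, _, hu1⟩ := hunit ⟨0, hm⟩
      refine ⟨u, trivial, u, trivial, hu1, hu1, ?_⟩
      rw [Txx_zero T hskew u]
      exact (Finset.sum_eq_zero fun i _ => by rw [hall i (Finset.mem_univ i), zero_smul]).symm
    · have hspos : 0 < s := lt_of_le_of_ne (Finset.sum_nonneg fun i _ => ha0 i) (Ne.symm hs0)
      set x : H := ∑ i, Real.sqrt (a i) • xx i with hxdef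
      set y : H := ∑ i, Real.sqrt (a i) • yy i with hydef
      have hxo : ∀ i j : Fin m, i ≠ j →
          (inner ℝ (Real.sqrt (a i) • xx i) (Real.sqrt (a j) • xx j) : ℝ) = 0 := by
        intro i j hij
        rw [real_inner_smul_left, real_inner_smul_right,
          horth i.succ j.succ (fun h => hij (Fin.succ_injective _ h)) _ (hxmem i) _ (hxmem j)]
        ring
      have hyo : ∀ i j : Fin m, i ≠ j →
          (inner ℝ (Real.sqrt (a i) • yy i) (Real.sqrt (a j) • yy j) : ℝ) = 0 := by
        intro i j hij
        rw [real_inner_smul_left, real_inner_smul_right,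
          horth i.succ j.succ (fun h => hij (Fin.succ_injective _ h)) _ (hymem i) _ (hymem j)]
        ring
      have hxn : ‖x‖ ^ 2 = s := by
        rw [hxdef, normsq_sum _ hxo, hs]
        refine Finset.sum_congr rfl fun i _ => ?_
        rw [norm_smul, Real.norm_eq_abs, abs_of_nonneg (Real.sqrt_nonneg _), hxnorm i,
          mul_one, Real.sq_sqrt (ha0 i)]
      have hyn : ‖y‖ ^ 2 = s := by
        rw [hydef, normsq_sum _ hyo, hs]
        refine Finset.sum_congr rfl fun i _ => ?_
        rw [norm_smul, Real.norm_eq_abs, abs_of_nonneg (Real.sqrt_nonneg _), hynorm i,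
          mul_one, Real.sq_sqrt (ha0 i)]
      have hTxy : T x y = ∑ i, a i • d i := by
        rw [hxdef, hydef]
        simp only [map_sum, LinearMap.sum_apply, map_smul, LinearMap.smul_apply, smul_smul]
        refine Finset.sum_congr rfl fun i _ => ?_
        rw [Finset.sum_eq_single i]
        · rw [smul_smul, Real.mul_self_sqrt (ha0 i), hTd i]
        · intro j _ hj
          rw [hTmixed j.succ i.succ (fun h => hj (Fin.succ_injective _ h))
              _ (hxmem j) _ (hymem i), smul_zero]
        · intro h; exact absurd (Finset.mem_univ i) h
      -- normalize and apply star lemma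
      have hsq : Real.sqrt s ≠ 0 := ne_of_gt (Real.sqrt_pos.mpr hspos)
      have hxnorm1 : ‖(Real.sqrt s)⁻¹ • x‖ = 1 := by
        rw [norm_smul, norm_inv, Real.norm_eq_abs, abs_of_nonneg (Real.sqrt_nonneg _)]
        have : ‖x‖ = Real.sqrt s := by
          rw [← Real.sqrt_sq (norm_nonneg x), hxn]
        rw [this, inv_mul_cancel₀ hsq]
      have hynorm1 : ‖(Real.sqrt s)⁻¹ • y‖ = 1 := by
        rw [norm_smul, norm_inv, Real.norm_eq_abs, abs_of_nonneg (Real.sqrt_nonneg _)]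
        have : ‖y‖ = Real.sqrt s := by
          rw [← Real.sqrt_sq (norm_nonneg y), hyn]
        rw [this, inv_mul_cancel₀ hsq]
      obtain ⟨z, hz1, hzT⟩ := star_lemma T hskew ((Real.sqrt s)⁻¹ • x) ((Real.sqrt s)⁻¹ • y)
        hxnorm1 hynorm1 s (le_of_lt hspos) has
      refine ⟨(Real.sqrt s)⁻¹ • x, trivial, z, trivial, hxnorm1, hz1, ?_⟩
      rw [hzT]
      simp only [map_smul, LinearMap.smul_apply, smul_smul]
      rw [show s * ((Real.sqrt s)⁻¹ * (Real.sqrt s)⁻¹) = 1 by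
        rw [← mul_inv, Real.mul_self_sqrt (le_of_lt hspos), mul_inv_cancel₀ hs0]]
      rw [one_smul, hTxy]
end

section
/- Every nonempty compact subset E of a finite-dimensional real normed space is contained in the linear span of its set E^e of extremal points; in particular, E^e is nonempty. -/
open Set

/-- The set of extremal points of a subset `E` of a real vector space: points `x ∈ E`
through which no nondegenerate affine line segment of `E` passes with `x` in its interior. -/
def extremalPoints {V : Type*} [AddCommGroup V] [Module ℝ V] (E : Set V) : Set V :=
  {x ∈ E | ¬∃ v : V, v ≠ 0 ∧ ∃ ε : ℝ, 0 < ε ∧ ∀ t ∈ Set.Ioo (-ε) ε, x + t • v ∈ E}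

lemma isCompact_convexHull_of_isCompact' {V : Type*} [NormedAddCommGroup V] [NormedSpace ℝ V]
    [FiniteDimensional ℝ V] {E : Set V} (hE : IsCompact E) : IsCompact (convexHull ℝ E) := by
  rcases E.eq_empty_or_nonempty with rfl | ⟨e₀, he₀⟩
  · simpa using isCompact_empty
  set n := Module.finrank ℝ V + 1 with hn
  have hcont : Continuous fun p : (Fin n → ℝ) × (Fin n → V) => ∑ i, p.1 i • p.2 i :=
    continuous_finset_sum _ fun i _ =>
      ((continuous_apply i).comp continuous_fst).smul ((continuous_apply i).comp continuous_snd)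
  have hKc : IsCompact ((stdSimplex ℝ (Fin n)) ×ˢ (Set.pi univ fun _ : Fin n => E)) :=
    (isCompact_stdSimplex (𝕜 := ℝ) (ι := Fin n)).prod (isCompact_univ_pi fun _ => hE)
  have himg : (fun p : (Fin n → ℝ) × (Fin n → V) => ∑ i, p.1 i • p.2 i) ''
      ((stdSimplex ℝ (Fin n)) ×ˢ (Set.pi univ fun _ : Fin n => E)) = convexHull ℝ E := by
    apply Subset.antisymm
    · rintro x ⟨⟨w, z⟩, ⟨hw, hz⟩, rfl⟩
      exact (convex_convexHull ℝ E).sum_mem (fun i _ => hw.1 i) hw.2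
        (fun i _ => subset_convexHull ℝ E (hz i (mem_univ i)))
    · intro x hx
      obtain ⟨ι, hfin, z, w, hzE, hai, hwpos, hwsum, hwx⟩ :=
        eq_pos_convex_span_of_mem_convexHull hx
      have hcard : Fintype.card ι ≤ n := by
        calc Fintype.card ι ≤ Module.finrank ℝ (vectorSpan ℝ (range z)) + 1 :=
              hai.card_le_finrank_succ
          _ ≤ n := by
              have := Submodule.finrank_le (vectorSpan ℝ (range z))
              omega
      obtain ⟨e⟩ : Nonempty (ι ↪ Fin n) :=
        ⟨(Fintype.equivFin ι).toEmbedding.trans (Fin.castLEEmb hcard)⟩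
      classical
      set W : Fin n → ℝ := Function.extend e w 0 with hW
      set Z : Fin n → V := Function.extend e z (fun _ => e₀) with hZ
      have hsum0 : ∀ k : Fin n, k ∉ Finset.univ.map e → W k • Z k = 0 := by
        intro k hk
        have : ¬∃ j, e j = k := by simpa using hk
        rw [hW]
        simp only [Function.extend_apply' _ _ _ this, Pi.zero_apply, zero_smul]
      refine ⟨(W, Z), ⟨⟨?_, ?_⟩, ?_⟩, ?_⟩
      · intro k
        show 0 ≤ W k
        rcases em (∃ j, e j = k) with ⟨j, rfl⟩ | h
        · rw [hW, e.injective.extend_apply]; exact (hwpos j).le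
        · rw [hW, Function.extend_apply' _ _ _ h]; rfl
      · show ∑ k, W k = 1
        rw [← hwsum]
        rw [show (∑ j, w j) = ∑ k ∈ Finset.univ.map e, W k by
          simp [Finset.sum_map, hW, e.injective.extend_apply]]
        symm
        apply Finset.sum_subset (Finset.subset_univ _)
        intro k _ hk
        have : ¬∃ j, e j = k := by simpa using hk
        rw [hW, Function.extend_apply' _ _ _ this]
        rfl
      · intro k _
        show Z k ∈ E
        rcases em (∃ j, e j = k) with ⟨j, rfl⟩ | h
        · rw [hZ, e.injective.extend_apply]; exact hzE ⟨j, rfl⟩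
        · rw [hZ, Function.extend_apply' _ _ _ h]; exact he₀
      · show (∑ k, W k • Z k) = x
        rw [← hwx]
        rw [show (∑ j, w j • z j) = ∑ k ∈ Finset.univ.map e, W k • Z k by
          simp [Finset.sum_map, hW, hZ, e.injective.extend_apply]]
        symm
        exact Finset.sum_subset (Finset.subset_univ _) fun k _ hk => hsum0 k hk
  rw [← himg]
  exact hKc.image hcont

lemma extremePoints_hull_subset_extremal {V : Type*} [NormedAddCommGroup V] [NormedSpace ℝ V]
    (E : Set V) : (convexHull ℝ E).extremePoints ℝ ⊆ extremalPoints E := by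
  intro x hx
  rw [mem_extremePoints] at hx
  refine ⟨extremePoints_convexHull_subset (mem_extremePoints.2 hx), ?_⟩
  rintro ⟨v, hv, ε, hε, hseg⟩
  have h1 : x + (ε/2) • v ∈ convexHull ℝ E :=
    subset_convexHull ℝ E (hseg _ ⟨by linarith, by linarith⟩)
  have h2 : x + (-(ε/2)) • v ∈ convexHull ℝ E :=
    subset_convexHull ℝ E (hseg _ ⟨by linarith, by linarith⟩)
  have hmem : x ∈ openSegment ℝ (x + (-(ε/2)) • v) (x + (ε/2) • v) := by
    refine ⟨1/2, 1/2, by norm_num, by norm_num, by norm_num, ?_⟩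
    simp only [smul_add, smul_smul]
    module
  have hpair := hx.2 (x + (-(ε/2)) • v) h2 (x + (ε/2) • v) h1 hmem
  have h : x + (ε/2) • v = x + (0:ℝ) • v := by rw [hpair.2]; simp
  have h' : (ε/2) • v = (0:ℝ) • v := add_left_cancel h
  have hε2 : (ε/2 : ℝ) ≠ 0 := by positivity
  exact hv (by simpa [hε2] using h')

/-- Every nonempty compact subset of a finite-dimensional real normed space is contained in
the linear span of its extremal points; in particular the set of extremal points is nonempty. -/
theorem compact_subset_span_extremalPoints
    {V : Type*} [NormedAddCommGroup V] [NormedSpace ℝ V] [FiniteDimensional ℝ V]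
    (E : Set V) (hne : E.Nonempty) (hE : IsCompact E) :
    E ⊆ (Submodule.span ℝ (extremalPoints E) : Set V) ∧ (extremalPoints E).Nonempty := by
  have hKcomp : IsCompact (convexHull ℝ E) := isCompact_convexHull_of_isCompact' hE
  have hKM := closure_convexHull_extremePoints hKcomp (convex_convexHull ℝ E)
  have hsub : (convexHull ℝ E).extremePoints ℝ ⊆ extremalPoints E :=
    extremePoints_hull_subset_extremal E
  have hne' : (extremalPoints E).Nonempty := by
    obtain ⟨x, hx⟩ := hKcomp.extremePoints_nonempty (hne.mono (subset_convexHull ℝ E))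
    exact ⟨x, hsub hx⟩
  refine ⟨?_, hne'⟩
  intro x hx
  have hx' : x ∈ closure (convexHull ℝ ((convexHull ℝ E).extremePoints ℝ)) := by
    rw [hKM]; exact subset_convexHull ℝ E hx
  have hcl : closure (convexHull ℝ ((convexHull ℝ E).extremePoints ℝ)) ⊆
      (Submodule.span ℝ (extremalPoints E) : Set V) := by
    apply closure_minimal
    · exact convexHull_min (hsub.trans Submodule.subset_span)
        (Submodule.span ℝ (extremalPoints E)).convex
    · exact (Submodule.span ℝ (extremalPoints E)).closed_of_finiteDimensional
  exact hcl hx'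
end

section
/- Let W₁ and W₂ be nontrivial finite-dimensional real normed spaces, and for i = 1, 2 let Ω_i ⊆ W_i be compact, symmetric about the origin (Ω_i = −Ω_i), star-shaped about the origin (0 ∈ Ω_i and tΩ_i ⊆ Ω_i for all t ∈ [0,1]), and spanning (span_ℝ Ω_i = W_i). Let Ω = {(a₁d₁, a₂d₂) ∈ W₁ × W₂ : d_i ∈ Ω_i, a_i ≥ 0, a₁ + a₂ ≤ 1} be their convex sum inside W₁ × W₂. Then the set of extremal points of Ω is exactly (Ω₁^e × {0}) ∪ ({0} × Ω₂^e). -/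
lemma neg_mem_of_symm' {W : Type*} [AddCommGroup W] (Ω : Set W) (hsym : Ω = -Ω)
    {d : W} (hd : d ∈ Ω) : -d ∈ Ω := by
  rw [hsym]; simpa using hd

lemma not_extremal_zero' {W : Type*} [AddCommGroup W] [Module ℝ W] [Nontrivial W]
    (Ω : Set W) (hsym : Ω = -Ω)
    (hstar : ∀ t ∈ Set.Icc (0:ℝ) 1, ∀ d ∈ Ω, t • d ∈ Ω)
    (hspan : Submodule.span ℝ Ω = ⊤) :
    (0:W) ∉ extremalPoints Ω := by
  rintro ⟨-, h⟩
  obtain ⟨d, hd, hdne⟩ : ∃ d ∈ Ω, d ≠ 0 := by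
    by_contra hc
    push_neg at hc
    have hsub : Ω ⊆ (↑(⊥ : Submodule ℝ W) : Set W) := by
      intro y hy; simpa using hc y hy
    have hle := Submodule.span_le.mpr hsub
    rw [hspan] at hle
    obtain ⟨y, hy⟩ := exists_ne (0:W)
    have : y ∈ (⊥ : Submodule ℝ W) := hle Submodule.mem_top
    simp only [Submodule.mem_bot] at this
    exact hy this
  apply h
  refine ⟨d, hdne, 1, one_pos, fun t ht => ?_⟩
  rcases le_or_gt 0 t with h0 | h0
  · simpa using hstar t ⟨h0, le_of_lt ht.2⟩ d hd
  · have heq : (0:W) + t • d = (-t) • (-d) := by module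
    rw [heq]
    exact hstar (-t) ⟨by linarith, by linarith [ht.1]⟩ (-d) (neg_mem_of_symm' Ω hsym hd)

lemma not_extremal_shrink' {W : Type*} [AddCommGroup W] [Module ℝ W] [Nontrivial W]
    (Ω : Set W) (hsym : Ω = -Ω)
    (hstar : ∀ t ∈ Set.Icc (0:ℝ) 1, ∀ d ∈ Ω, t • d ∈ Ω)
    (hspan : Submodule.span ℝ Ω = ⊤)
    {d : W} (hd : d ∈ Ω) {s : ℝ} (hs0 : 0 ≤ s) (hs1 : s < 1) :
    s • d ∉ extremalPoints Ω := by
  rcases eq_or_ne (s • d) 0 with h0 | hne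
  · rw [h0]; exact not_extremal_zero' Ω hsym hstar hspan
  · rintro ⟨-, h⟩
    apply h
    refine ⟨s • d, hne, min 1 (1 - s), lt_min one_pos (by linarith), fun t ht => ?_⟩
    have hm1 : min 1 (1 - s) ≤ 1 := min_le_left _ _
    have hm2 : min 1 (1 - s) ≤ 1 - s := min_le_right _ _
    have ht1 := ht.1
    have ht2 := ht.2
    have heq : s • d + t • (s • d) = ((1 + t) * s) • d := by module
    rw [heq]
    apply hstar _ _ d hd
    constructor
    · have : (0:ℝ) ≤ 1 + t := by linarith
      exact mul_nonneg this hs0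
    · nlinarith [mul_nonneg hs0 (by linarith : (0:ℝ) ≤ 1 - s - t), sq_nonneg (1 - s)]

/-- For compact, symmetric, star-shaped, spanning subsets `Ω₁ ⊆ W₁`, `Ω₂ ⊆ W₂` of nontrivial
finite-dimensional real normed spaces, the extremal points of the convex sum
`Ω = {(a₁d₁, a₂d₂) : dᵢ ∈ Ωᵢ, aᵢ ≥ 0, a₁ + a₂ ≤ 1} ⊆ W₁ × W₂` are exactly
`(Ω₁^e × {0}) ∪ ({0} × Ω₂^e)`. -/
theorem extremalPoints_convexSum
    {W₁ W₂ : Type*}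
    [NormedAddCommGroup W₁] [NormedSpace ℝ W₁] [FiniteDimensional ℝ W₁] [Nontrivial W₁]
    [NormedAddCommGroup W₂] [NormedSpace ℝ W₂] [FiniteDimensional ℝ W₂] [Nontrivial W₂]
    (Ω₁ : Set W₁) (Ω₂ : Set W₂)
    (h₁c : IsCompact Ω₁) (h₂c : IsCompact Ω₂)
    (h₁sym : Ω₁ = -Ω₁) (h₂sym : Ω₂ = -Ω₂)
    (h₁zero : (0 : W₁) ∈ Ω₁) (h₂zero : (0 : W₂) ∈ Ω₂)
    (h₁star : ∀ t ∈ Set.Icc (0 : ℝ) 1, ∀ d ∈ Ω₁, t • d ∈ Ω₁)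
    (h₂star : ∀ t ∈ Set.Icc (0 : ℝ) 1, ∀ d ∈ Ω₂, t • d ∈ Ω₂)
    (h₁span : Submodule.span ℝ Ω₁ = ⊤) (h₂span : Submodule.span ℝ Ω₂ = ⊤)
    (Ω : Set (W₁ × W₂))
    (hΩ : Ω = {p | ∃ d₁ ∈ Ω₁, ∃ d₂ ∈ Ω₂, ∃ a₁ a₂ : ℝ,
        0 ≤ a₁ ∧ 0 ≤ a₂ ∧ a₁ + a₂ ≤ 1 ∧ p = (a₁ • d₁, a₂ • d₂)}) :
    extremalPoints Ω =
      (extremalPoints Ω₁ ×ˢ ({0} : Set W₂)) ∪ (({0} : Set W₁) ×ˢ extremalPoints Ω₂) := by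
  ext x
  simp only [Set.mem_union, Set.mem_prod, Set.mem_singleton_iff]
  constructor
  · rintro ⟨hxΩ, hxne⟩
    have hx0 : x.1 = 0 ∨ x.2 = 0 := by
      by_contra hc
      push_neg at hc
      obtain ⟨hne1, hne2⟩ := hc
      rw [hΩ] at hxΩ
      obtain ⟨d₁, hd₁, d₂, hd₂, a₁, a₂, ha₁, ha₂, hsum, hx⟩ := hxΩ
      have hx1 : x.1 = a₁ • d₁ := by rw [hx]
      have hx2 : x.2 = a₂ • d₂ := by rw [hx]
      have ha₁pos : 0 < a₁ := by
        rcases ha₁.lt_or_eq with h | h; · exact h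
        exact absurd (by rw [hx1, ← h, zero_smul]) hne1
      have ha₂pos : 0 < a₂ := by
        rcases ha₂.lt_or_eq with h | h; · exact h
        exact absurd (by rw [hx2, ← h, zero_smul]) hne2
      have hd₁ne : d₁ ≠ 0 := by
        intro h; exact hne1 (by rw [hx1, h, smul_zero])
      apply hxne
      refine ⟨(d₁, -d₂), by simp [hd₁ne], min a₁ a₂, lt_min ha₁pos ha₂pos, fun t ht => ?_⟩
      have ht1 := ht.1
      have ht2 := ht.2
      have hma := min_le_left a₁ a₂
      have hmb := min_le_right a₁ a₂
      rw [hΩ]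
      refine ⟨d₁, hd₁, d₂, hd₂, a₁ + t, a₂ - t, by linarith, by linarith, by linarith, ?_⟩
      rw [hx]
      apply Prod.ext
      · simp [add_smul]
      · simp only [Prod.snd_add, Prod.smul_snd, smul_neg]
        module
    rcases hx0 with h | h
    · -- x.1 = 0, show right branch
      right
      refine ⟨h, ?_, ?_⟩
      · -- x.2 ∈ Ω₂
        rw [hΩ] at hxΩ
        obtain ⟨d₁, hd₁, d₂, hd₂, a₁, a₂, ha₁, ha₂, hsum, hx⟩ := hxΩ
        have hx2 : x.2 = a₂ • d₂ := by rw [hx]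
        rw [hx2]
        exact h₂star a₂ ⟨ha₂, by linarith⟩ d₂ hd₂
      · rintro ⟨w, hw, ε, hε, hseg⟩
        apply hxne
        refine ⟨((0 : W₁), w), by simp [hw], ε, hε, fun t ht => ?_⟩
        rw [hΩ]
        refine ⟨0, h₁zero, x.2 + t • w, hseg t ht, 0, 1, le_refl _, zero_le_one, by norm_num, ?_⟩
        apply Prod.ext
        · simp [h]
        · simp
    · -- x.2 = 0, show left branch
      left
      refine ⟨⟨?_, ?_⟩, h⟩
      · rw [hΩ] at hxΩ
        obtain ⟨d₁, hd₁, d₂, hd₂, a₁, a₂, ha₁, ha₂, hsum, hx⟩ := hxΩ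
        have hx1 : x.1 = a₁ • d₁ := by rw [hx]
        rw [hx1]
        exact h₁star a₁ ⟨ha₁, by linarith⟩ d₁ hd₁
      · rintro ⟨v, hv, ε, hε, hseg⟩
        apply hxne
        refine ⟨(v, (0 : W₂)), by simp [hv], ε, hε, fun t ht => ?_⟩
        rw [hΩ]
        refine ⟨x.1 + t • v, hseg t ht, 0, h₂zero, 1, 0, zero_le_one, le_refl _, by norm_num, ?_⟩
        apply Prod.ext
        · simp
        · simp [h]
  · rintro (⟨hx₁, hx₂⟩ | ⟨hx₁, hx₂⟩)
    · -- x.1 extremal in Ω₁, x.2 = 0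
      constructor
      · rw [hΩ]
        refine ⟨x.1, hx₁.1, 0, h₂zero, 1, 0, zero_le_one, le_refl _, by norm_num, ?_⟩
        apply Prod.ext
        · simp
        · simp [hx₂]
      · rintro ⟨⟨v, w⟩, hvw, ε, hε, hseg⟩
        by_cases hv : v = 0
        · subst hv
          have hw : w ≠ 0 := by
            intro h; exact hvw (by simp [h])
          have hmem := hseg (ε/2) ⟨by linarith, by linarith⟩
          rw [hΩ] at hmem
          obtain ⟨d₁, hd₁, d₂, hd₂, a₁, a₂, ha₁, ha₂, hsum, hx⟩ := hmem
          have h1 : x.1 = a₁ • d₁ := by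
            have := congrArg Prod.fst hx
            simpa using this
          have h2 : (ε/2) • w = a₂ • d₂ := by
            have := congrArg Prod.snd hx
            simpa [hx₂] using this
          have ha₂pos : 0 < a₂ := by
            rcases ha₂.lt_or_eq with hp | hp; · exact hp
            exfalso
            apply hw
            have h0 : (ε/2) • w = 0 := by rw [h2, ← hp, zero_smul]
            have hε2 : (ε/2 : ℝ) ≠ 0 := by positivity
            exact (smul_eq_zero.mp h0).resolve_left hε2
          exact not_extremal_shrink' Ω₁ h₁sym h₁star h₁span hd₁ ha₁ (by linarith) (h1 ▸ hx₁)
        · apply hx₁.2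
          refine ⟨v, hv, ε, hε, fun t ht => ?_⟩
          have hmem := hseg t ht
          rw [hΩ] at hmem
          obtain ⟨d₁, hd₁, d₂, hd₂, a₁, a₂, ha₁, ha₂, hsum, hx⟩ := hmem
          have h1 : x.1 + t • v = a₁ • d₁ := by
            have := congrArg Prod.fst hx
            simpa using this
          rw [h1]
          exact h₁star a₁ ⟨ha₁, by linarith⟩ d₁ hd₁
    · -- x.1 = 0, x.2 extremal in Ω₂
      constructor
      · rw [hΩ]
        refine ⟨0, h₁zero, x.2, hx₂.1, 0, 1, le_refl _, zero_le_one, by norm_num, ?_⟩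
        apply Prod.ext
        · simp [hx₁]
        · simp
      · rintro ⟨⟨v, w⟩, hvw, ε, hε, hseg⟩
        by_cases hw : w = 0
        · subst hw
          have hv : v ≠ 0 := by
            intro h; exact hvw (by simp [h])
          have hmem := hseg (ε/2) ⟨by linarith, by linarith⟩
          rw [hΩ] at hmem
          obtain ⟨d₁, hd₁, d₂, hd₂, a₁, a₂, ha₁, ha₂, hsum, hx⟩ := hmem
          have h2 : x.2 = a₂ • d₂ := by
            have := congrArg Prod.snd hx
            simpa using this
          have h1 : (ε/2) • v = a₁ • d₁ := by
            have := congrArg Prod.fst hx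
            simpa [hx₁] using this
          have ha₁pos : 0 < a₁ := by
            rcases ha₁.lt_or_eq with hp | hp; · exact hp
            exfalso
            apply hv
            have h0 : (ε/2) • v = 0 := by rw [h1, ← hp, zero_smul]
            have hε2 : (ε/2 : ℝ) ≠ 0 := by positivity
            exact (smul_eq_zero.mp h0).resolve_left hε2
          exact not_extremal_shrink' Ω₂ h₂sym h₂star h₂span hd₂ ha₂ (by linarith) (h2 ▸ hx₂)
        · apply hx₂.2
          refine ⟨w, hw, ε, hε, fun t ht => ?_⟩
          have hmem := hseg t ht
          rw [hΩ] at hmem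
          obtain ⟨d₁, hd₁, d₂, hd₂, a₁, a₂, ha₁, ha₂, hsum, hx⟩ := hmem
          have h2 : x.2 + t • w = a₂ • d₂ := by
            have := congrArg Prod.snd hx
            simpa using this
          rw [h2]
          exact h₂star a₂ ⟨ha₂, by linarith⟩ d₂ hd₂
end

section
/- Let n ≥ 1 and let A, B be real n×n matrices with A skew-symmetric (Aᵀ = −A) and B symmetric (Bᵀ = B). Define functions on ℝ^{2n+1} by aⁱ = ∑ⱼ (A_{ij} x^j + B_{ij} y^j), bⁱ = ∑ⱼ (A_{ij} y^j − B_{ij} x^j), and c = ∑_{i,j} A_{ij} x^j y^i + (1/2) ∑_{i,j} B_{ij} (x^i x^j + y^i y^j). Then for all indices i, j: Xᵢa^j + Xⱼa^i = 0, Yᵢb^j + Yⱼb^i = 0, Xᵢb^j + Yⱼa^i = 0, Xᵢc = −bⁱ, Yᵢc = aⁱ, and moreover Taⁱ = 0, Tbⁱ = 0, Tc = 0. Hence K_{A,B} = ∑ᵢ aⁱXᵢ + ∑ᵢ bⁱYᵢ + cT is a (strong) H-Killing field on the Heisenberg group ℍⁿ. -/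
open Matrix

/-- The underlying space `ℝ^{2n+1}` of the Heisenberg group `ℍⁿ`,
with coordinates `(x, y, t)`. -/
abbrev Heis (n : ℕ) : Type := (Fin n → ℝ) × (Fin n → ℝ) × ℝ

/-- The horizontal vector field `Xᵢ = ∂/∂xⁱ − (yⁱ/2) ∂/∂t` acting on functions. -/
noncomputable def Xop {n : ℕ} (i : Fin n) (f : Heis n → ℝ) (p : Heis n) : ℝ :=
  fderiv ℝ f p (Pi.single i 1, 0, -(p.2.1 i) / 2)

/-- The horizontal vector field `Yᵢ = ∂/∂yⁱ + (xⁱ/2) ∂/∂t` acting on functions. -/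
noncomputable def Yop {n : ℕ} (i : Fin n) (f : Heis n → ℝ) (p : Heis n) : ℝ :=
  fderiv ℝ f p (0, Pi.single i 1, p.1 i / 2)

/-- The vertical vector field `T = ∂/∂t` acting on functions. -/
noncomputable def Tder {n : ℕ} (f : Heis n → ℝ) (p : Heis n) : ℝ :=
  fderiv ℝ f p (0, 0, 1)

/-- The coordinate function `p ↦ xʲ` as a continuous linear map. -/
noncomputable def Lx {n : ℕ} (j : Fin n) : Heis n →L[ℝ] ℝ :=
  (ContinuousLinearMap.proj j).comp (ContinuousLinearMap.fst ℝ (Fin n → ℝ) ((Fin n → ℝ) × ℝ))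

/-- The coordinate function `p ↦ yʲ` as a continuous linear map. -/
noncomputable def Ly {n : ℕ} (j : Fin n) : Heis n →L[ℝ] ℝ :=
  (ContinuousLinearMap.proj j).comp
    ((ContinuousLinearMap.fst ℝ (Fin n → ℝ) ℝ).comp
      (ContinuousLinearMap.snd ℝ (Fin n → ℝ) ((Fin n → ℝ) × ℝ)))

@[simp] lemma Lx_apply {n : ℕ} (j : Fin n) (v : Heis n) : Lx j v = v.1 j := rfl
@[simp] lemma Ly_apply {n : ℕ} (j : Fin n) (v : Heis n) : Ly j v = v.2.1 j := rfl

lemma hasFDerivAt_a {n : ℕ} (A B : Matrix (Fin n) (Fin n) ℝ) (i : Fin n) (p : Heis n) :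
    HasFDerivAt (fun q : Heis n => ∑ j, (A i j * q.1 j + B i j * q.2.1 j))
      (∑ j, (A i j • Lx j + B i j • Ly j)) p :=
  HasFDerivAt.fun_sum fun j _ =>
    ((Lx j).hasFDerivAt.const_mul (A i j)).add ((Ly j).hasFDerivAt.const_mul (B i j))

lemma hasFDerivAt_b {n : ℕ} (A B : Matrix (Fin n) (Fin n) ℝ) (i : Fin n) (p : Heis n) :
    HasFDerivAt (fun q : Heis n => ∑ j, (A i j * q.2.1 j - B i j * q.1 j))
      (∑ j, (A i j • Ly j - B i j • Lx j)) p :=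
  HasFDerivAt.fun_sum fun j _ =>
    ((Ly j).hasFDerivAt.const_mul (A i j)).sub ((Lx j).hasFDerivAt.const_mul (B i j))

lemma hasFDerivAt_c {n : ℕ} (A B : Matrix (Fin n) (Fin n) ℝ) (p : Heis n) :
    HasFDerivAt (fun q : Heis n => (∑ i, ∑ j, A i j * q.1 j * q.2.1 i) +
        (1 / 2) * ∑ i, ∑ j, B i j * (q.1 i * q.1 j + q.2.1 i * q.2.1 j))
      ((∑ i, ∑ j, ((A i j * p.1 j) • Ly i + p.2.1 i • (A i j • Lx j))) +
        (1 / 2 : ℝ) • (∑ i, ∑ j, B i j •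
          ((p.1 i • Lx j + p.1 j • Lx i) + (p.2.1 i • Ly j + p.2.1 j • Ly i)))) p := by
  refine HasFDerivAt.add ?_ ?_
  · exact HasFDerivAt.fun_sum fun i _ => HasFDerivAt.fun_sum fun j _ =>
      ((Lx j).hasFDerivAt.const_mul (A i j)).mul (Ly i).hasFDerivAt
  · exact HasFDerivAt.const_mul (HasFDerivAt.fun_sum fun i _ => HasFDerivAt.fun_sum fun j _ =>
      (((Lx i).hasFDerivAt.mul (Lx j).hasFDerivAt).add
        ((Ly i).hasFDerivAt.mul (Ly j).hasFDerivAt)).const_mul (B i j)) (1/2)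

/-- For `A` skew-symmetric and `B` symmetric, the coefficient functions of `K_{A,B}` satisfy
the weak H-Killing equations together with `Taⁱ = Tbⁱ = Tc = 0`; hence
`K_{A,B} = ∑ aⁱXᵢ + ∑ bⁱYᵢ + cT` is a strong H-Killing field on the Heisenberg group. -/
theorem heisenberg_unitary_killing_fields
    (n : ℕ) (hn : 1 ≤ n) (A B : Matrix (Fin n) (Fin n) ℝ)
    (hA : Aᵀ = -A) (hB : Bᵀ = B)
    (a b : Fin n → Heis n → ℝ) (c : Heis n → ℝ)
    (ha : ∀ i p, a i p = ∑ j, (A i j * p.1 j + B i j * p.2.1 j))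
    (hb : ∀ i p, b i p = ∑ j, (A i j * p.2.1 j - B i j * p.1 j))
    (hc : ∀ p, c p = (∑ i, ∑ j, A i j * p.1 j * p.2.1 i) +
        (1 / 2) * ∑ i, ∑ j, B i j * (p.1 i * p.1 j + p.2.1 i * p.2.1 j)) :
    (∀ i j, ∀ p, Xop i (a j) p + Xop j (a i) p = 0) ∧
      (∀ i j, ∀ p, Yop i (b j) p + Yop j (b i) p = 0) ∧
      (∀ i j, ∀ p, Xop i (b j) p + Yop j (a i) p = 0) ∧
      (∀ i, ∀ p, Xop i c p = -(b i p)) ∧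
      (∀ i, ∀ p, Yop i c p = a i p) ∧
      (∀ i, ∀ p, Tder (a i) p = 0) ∧
      (∀ i, ∀ p, Tder (b i) p = 0) ∧
      (∀ p, Tder c p = 0) := by
  have hA' : ∀ i j, A j i = -A i j := fun i j => by
    simpa using congrFun (congrFun hA i) j
  have hB' : ∀ i j, B j i = B i j := fun i j => by
    simpa using congrFun (congrFun hB i) j
  have hae : ∀ i, a i = fun q : Heis n => ∑ j, (A i j * q.1 j + B i j * q.2.1 j) :=
    fun i => funext (ha i)
  have hbe : ∀ i, b i = fun q : Heis n => ∑ j, (A i j * q.2.1 j - B i j * q.1 j) :=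
    fun i => funext (hb i)
  have hce : c = fun q : Heis n => (∑ i, ∑ j, A i j * q.1 j * q.2.1 i) +
        (1 / 2) * ∑ i, ∑ j, B i j * (q.1 i * q.1 j + q.2.1 i * q.2.1 j) := funext hc
  refine ⟨?_, ?_, ?_, ?_, ?_, ?_, ?_, ?_⟩
  · intro i j p
    simp only [Xop, hae, (hasFDerivAt_a A B _ p).fderiv]
    simp [Pi.single_apply]
    rw [hA' i j]; ring
  · intro i j p
    simp only [Yop, hbe, (hasFDerivAt_b A B _ p).fderiv]
    simp [Pi.single_apply]
    rw [hA' i j]; ring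
  · intro i j p
    simp only [Xop, Yop, hbe, hae, (hasFDerivAt_b A B _ p).fderiv,
      (hasFDerivAt_a A B _ p).fderiv]
    simp [Pi.single_apply]
    rw [hB' i j]; ring
  · intro i p
    simp only [Xop, hce, hb, (hasFDerivAt_c A B p).fderiv]
    have eA : ∑ x, p.2.1 x * A x i = -∑ x, A i x * p.2.1 x := by
      rw [← Finset.sum_neg_distrib]
      exact Finset.sum_congr rfl fun x _ => by rw [hA' i x]; ring
    have eB : ∑ x, B x i * p.1 x = ∑ x, B i x * p.1 x :=
      Finset.sum_congr rfl fun x _ => by rw [hB' i x]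
    simp [Pi.single_apply, mul_ite, ite_mul, mul_add, Finset.sum_add_distrib,
      Finset.sum_ite_eq, Finset.sum_ite_eq', ← Finset.mul_sum]
    rw [eA, eB]; ring
  · intro i p
    simp only [Yop, hce, ha, (hasFDerivAt_c A B p).fderiv]
    have eB : ∑ x, B x i * p.2.1 x = ∑ x, B i x * p.2.1 x :=
      Finset.sum_congr rfl fun x _ => by rw [hB' i x]
    simp [Pi.single_apply, mul_ite, ite_mul, mul_add, Finset.sum_add_distrib,
      Finset.sum_ite_eq, Finset.sum_ite_eq', ← Finset.mul_sum]
    rw [eB]; ring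
  · intro i p
    simp only [Tder, hae, (hasFDerivAt_a A B _ p).fderiv]
    simp
  · intro i p
    simp only [Tder, hbe, (hasFDerivAt_b A B _ p).fderiv]
    simp
  · intro p
    simp only [Tder, hce, (hasFDerivAt_c A B p).fderiv]
    simp
end

section
/- Let n ≥ 1 and let aⁱ, bⁱ, c : ℝ^{2n+1} → ℝ (i = 1,…,n) be smooth functions satisfying, for all indices i, j: Xᵢa^j + Xⱼa^i = 0, Yᵢb^j + Yⱼb^i = 0, Xᵢb^j + Yⱼa^i = 0, Xᵢc = −bⁱ, and Yᵢc = aⁱ. Then Tc = 0, Taⁱ = 0, and Tbⁱ = 0 for all i; that is, all the coefficient functions are independent of the variable t. Consequently every weak H-Killing field on the Heisenberg group ℍⁿ is a strong H-Killing field. -/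
section aux
variable {n : ℕ}

lemma smooth_fderiv {f : Heis n → ℝ} (hf : ContDiff ℝ (⊤ : ℕ∞) f) :
    ContDiff ℝ (⊤ : ℕ∞) (fderiv ℝ f) := hf.fderiv_right (by simp)

lemma symm2 {f : Heis n → ℝ} (hf : ContDiff ℝ (⊤ : ℕ∞) f) (p v w : Heis n) :
    fderiv ℝ (fderiv ℝ f) p v w = fderiv ℝ (fderiv ℝ f) p w v :=
  (hf.contDiffAt.isSymmSndFDerivAt (by rw [minSmoothness_of_isRCLikeNormedField]; exact WithTop.coe_le_coe.mpr le_top)) v w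

/-- Key product rule: derivative of `q ↦ fderiv f q (v q)` in direction `w`. -/
lemma key {f : Heis n → ℝ} (hf : ContDiff ℝ (⊤ : ℕ∞) f) {v : Heis n → Heis n}
    {L : Heis n →L[ℝ] Heis n} {p : Heis n} (hv : HasFDerivAt v L p) (w : Heis n) :
    fderiv ℝ (fun q => fderiv ℝ f q (v q)) p w
      = fderiv ℝ (fderiv ℝ f) p (v p) w + fderiv ℝ f p (L w) := by
  rw [fderiv_clm_apply (((smooth_fderiv hf).differentiable (by simp)).differentiableAt)
      hv.differentiableAt]
  simp [hv.fderiv, symm2 hf p w (v p)]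
  ring

/-- derivative of the coefficient field of `Xop i`. -/
noncomputable def LX (n : ℕ) (i : Fin n) : Heis n →L[ℝ] Heis n :=
  (0 : Heis n →L[ℝ] (Fin n → ℝ)).prod ((0 : Heis n →L[ℝ] (Fin n → ℝ)).prod
    ((-(1/2) : ℝ) • ((ContinuousLinearMap.proj i).comp
      ((ContinuousLinearMap.fst ℝ (Fin n → ℝ) ℝ).comp
        (ContinuousLinearMap.snd ℝ (Fin n → ℝ) ((Fin n → ℝ) × ℝ))))))

noncomputable def LY (n : ℕ) (i : Fin n) : Heis n →L[ℝ] Heis n :=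
  (0 : Heis n →L[ℝ] (Fin n → ℝ)).prod ((0 : Heis n →L[ℝ] (Fin n → ℝ)).prod
    (((1/2) : ℝ) • ((ContinuousLinearMap.proj i).comp
      (ContinuousLinearMap.fst ℝ (Fin n → ℝ) ((Fin n → ℝ) × ℝ)))))

lemma hasFDerivAt_vX (i : Fin n) (p : Heis n) :
    HasFDerivAt (fun q : Heis n => ((Pi.single i 1 : Fin n → ℝ), (0 : Fin n → ℝ),
      -(q.2.1 i) / 2)) (LX n i) p := by
  refine HasFDerivAt.prodMk (hasFDerivAt_const _ _) (HasFDerivAt.prodMk (hasFDerivAt_const _ _) ?_)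
  have : (fun q : Heis n => -(q.2.1 i) / 2) = fun q : Heis n => (-(1/2) : ℝ) * (q.2.1 i) := by
    funext q; ring
  rw [this]
  exact (((ContinuousLinearMap.proj i).comp
      ((ContinuousLinearMap.fst ℝ (Fin n → ℝ) ℝ).comp
        (ContinuousLinearMap.snd ℝ (Fin n → ℝ) ((Fin n → ℝ) × ℝ)))).hasFDerivAt (x := p)).const_mul _

lemma hasFDerivAt_vY (i : Fin n) (p : Heis n) :
    HasFDerivAt (fun q : Heis n => ((0 : Fin n → ℝ), (Pi.single i 1 : Fin n → ℝ),
      q.1 i / 2)) (LY n i) p := by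
  refine HasFDerivAt.prodMk (hasFDerivAt_const _ _) (HasFDerivAt.prodMk (hasFDerivAt_const _ _) ?_)
  have : (fun q : Heis n => q.1 i / 2) = fun q : Heis n => ((1/2) : ℝ) * (q.1 i) := by
    funext q; ring
  rw [this]
  exact (((ContinuousLinearMap.proj i).comp
      (ContinuousLinearMap.fst ℝ (Fin n → ℝ) ((Fin n → ℝ) × ℝ))).hasFDerivAt (x := p)).const_mul _

lemma commXY {f : Heis n → ℝ} (hf : ContDiff ℝ (⊤ : ℕ∞) f) (i : Fin n) (p : Heis n) :
    Xop i (Yop i f) p - Yop i (Xop i f) p = Tder f p := by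
  have h1 : Xop i (Yop i f) p
      = fderiv ℝ (fderiv ℝ f) p ((0 : Fin n → ℝ), Pi.single i 1, p.1 i / 2)
          ((Pi.single i 1 : Fin n → ℝ), (0:Fin n → ℝ), -(p.2.1 i)/2)
        + fderiv ℝ f p (LY n i ((Pi.single i 1 : Fin n → ℝ), (0:Fin n → ℝ), -(p.2.1 i)/2)) := by
    have := key hf (hasFDerivAt_vY i p) ((Pi.single i 1 : Fin n → ℝ), (0:Fin n → ℝ), -(p.2.1 i)/2)
    exact this
  have h2 : Yop i (Xop i f) p
      = fderiv ℝ (fderiv ℝ f) p ((Pi.single i 1 : Fin n → ℝ), (0:Fin n → ℝ), -(p.2.1 i)/2)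
          ((0 : Fin n → ℝ), Pi.single i 1, p.1 i / 2)
        + fderiv ℝ f p (LX n i ((0 : Fin n → ℝ), Pi.single i 1, p.1 i / 2)) := by
    have := key hf (hasFDerivAt_vX i p) ((0 : Fin n → ℝ), Pi.single i 1, p.1 i / 2)
    exact this
  rw [h1, h2, symm2 hf p]
  have hLY : LY n i ((Pi.single i 1 : Fin n → ℝ), (0:Fin n → ℝ), -(p.2.1 i)/2)
      = ((0:Fin n → ℝ), (0:Fin n → ℝ), (1/2 : ℝ)) := by
    simp [LY, Prod.ext_iff]
  have hLX : LX n i ((0 : Fin n → ℝ), Pi.single i 1, p.1 i / 2)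
      = ((0:Fin n → ℝ), (0:Fin n → ℝ), (-(1/2) : ℝ)) := by
    simp [LX, Prod.ext_iff]
  rw [hLY, hLX]
  have e1 : ((0:Fin n → ℝ), (0:Fin n → ℝ), (1/2 : ℝ)) = ((1/2:ℝ) • ((0,0,1) : Heis n)) := by
    simp [Prod.ext_iff]
  have e2 : ((0:Fin n → ℝ), (0:Fin n → ℝ), (-(1/2) : ℝ)) = ((-(1/2):ℝ) • ((0,0,1) : Heis n)) := by
    simp [Prod.ext_iff]
  rw [e1, e2, map_smul, map_smul]
  simp [Tder]
  ring
end aux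

section comm
variable {n : ℕ}

lemma commTY {f : Heis n → ℝ} (hf : ContDiff ℝ (⊤ : ℕ∞) f) (i : Fin n) (p : Heis n) :
    Tder (Yop i f) p = Yop i (Tder f) p := by
  have h1 := key hf (hasFDerivAt_vY i p) (((0:Fin n→ℝ),(0:Fin n→ℝ),(1:ℝ)) : Heis n)
  have h2 := key hf (hasFDerivAt_const (((0:Fin n→ℝ),(0:Fin n→ℝ),(1:ℝ)) : Heis n) p)
      (((0:Fin n→ℝ), (Pi.single i 1 : Fin n → ℝ), p.1 i / 2) : Heis n)
  have hs := symm2 hf p ((0:Fin n→ℝ), (Pi.single i 1 : Fin n → ℝ), p.1 i / 2)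
      ((0:Fin n→ℝ),(0:Fin n→ℝ),(1:ℝ))
  have hLY : LY n i ((0:Fin n→ℝ),(0:Fin n→ℝ),(1:ℝ)) = 0 := by simp [LY, Prod.ext_iff]
  rw [hLY] at h1
  simp only [map_zero, add_zero, ContinuousLinearMap.zero_apply] at h1 h2
  calc Tder (Yop i f) p
      = fderiv ℝ (fderiv ℝ f) p ((0:Fin n→ℝ), (Pi.single i 1 : Fin n → ℝ), p.1 i / 2)
          ((0:Fin n→ℝ),(0:Fin n→ℝ),(1:ℝ)) := by exact h1
    _ = Yop i (Tder f) p := by rw [hs]; exact h2.symm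

lemma commTX {f : Heis n → ℝ} (hf : ContDiff ℝ (⊤ : ℕ∞) f) (i : Fin n) (p : Heis n) :
    Tder (Xop i f) p = Xop i (Tder f) p := by
  have h1 := key hf (hasFDerivAt_vX i p) (((0:Fin n→ℝ),(0:Fin n→ℝ),(1:ℝ)) : Heis n)
  have h2 := key hf (hasFDerivAt_const (((0:Fin n→ℝ),(0:Fin n→ℝ),(1:ℝ)) : Heis n) p)
      (((Pi.single i 1 : Fin n → ℝ), (0:Fin n→ℝ), -(p.2.1 i) / 2) : Heis n)
  have hs := symm2 hf p ((Pi.single i 1 : Fin n → ℝ), (0:Fin n→ℝ), -(p.2.1 i) / 2)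
      ((0:Fin n→ℝ),(0:Fin n→ℝ),(1:ℝ))
  have hLX : LX n i ((0:Fin n→ℝ),(0:Fin n→ℝ),(1:ℝ)) = 0 := by simp [LX, Prod.ext_iff]
  rw [hLX] at h1
  simp only [map_zero, add_zero, ContinuousLinearMap.zero_apply] at h1 h2
  calc Tder (Xop i f) p
      = fderiv ℝ (fderiv ℝ f) p ((Pi.single i 1 : Fin n → ℝ), (0:Fin n→ℝ), -(p.2.1 i) / 2)
          ((0:Fin n→ℝ),(0:Fin n→ℝ),(1:ℝ)) := by exact h1
    _ = Xop i (Tder f) p := by rw [hs]; exact h2.symm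

end comm



/-- If smooth coefficient functions `aⁱ, bⁱ, c` satisfy the weak H-Killing equations on the
Heisenberg group `ℍⁿ`, then `Tc = 0`, `Taⁱ = 0` and `Tbⁱ = 0`; consequently every weak
H-Killing field on `ℍⁿ` is a strong H-Killing field. -/
theorem heisenberg_weak_killing_is_strong
    (n : ℕ) (hn : 1 ≤ n)
    (a b : Fin n → Heis n → ℝ) (c : Heis n → ℝ)
    (ha_smooth : ∀ i, ContDiff ℝ (⊤ : ℕ∞) (a i))
    (hb_smooth : ∀ i, ContDiff ℝ (⊤ : ℕ∞) (b i))
    (hc_smooth : ContDiff ℝ (⊤ : ℕ∞) c)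
    (haa : ∀ i j, ∀ p, Xop i (a j) p + Xop j (a i) p = 0)
    (hbb : ∀ i j, ∀ p, Yop i (b j) p + Yop j (b i) p = 0)
    (hab : ∀ i j, ∀ p, Xop i (b j) p + Yop j (a i) p = 0)
    (hcx : ∀ i, ∀ p, Xop i c p = -(b i p))
    (hcy : ∀ i, ∀ p, Yop i c p = a i p) :
    (∀ p, Tder c p = 0) ∧
      (∀ i, ∀ p, Tder (a i) p = 0) ∧
      (∀ i, ∀ p, Tder (b i) p = 0) := by
  set i0 : Fin n := ⟨0, hn⟩ with hi0
  have hYc : Yop i0 c = a i0 := funext (hcy i0)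
  have hXc : Xop i0 c = fun q => -(b i0 q) := funext (hcx i0)
  have hTc : ∀ p, Tder c p = 0 := by
    intro p
    have h := commXY hc_smooth i0 p
    rw [hYc, hXc] at h
    have hneg : Yop i0 (fun q => -(b i0 q)) p = -(Yop i0 (b i0) p) := by
      simp [Yop, fderiv_neg]
    rw [hneg] at h
    have hA := haa i0 i0 p
    have hB := hbb i0 i0 p
    linarith
  have hTc0 : Tder c = 0 := funext hTc
  refine ⟨hTc, ?_, ?_⟩
  · intro i p
    have hYci : Yop i c = a i := funext (hcy i)
    rw [← hYci, commTY hc_smooth i p, hTc0]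
    show fderiv ℝ (fun _ : Heis n => (0:ℝ)) p _ = 0
    simp
  · intro i p
    have hXci : Xop i c = fun q => -(b i q) := funext (hcx i)
    have hbi : b i = fun q => -(Xop i c q) := by funext q; rw [hcx i q]; ring
    rw [hbi]
    have : Tder (fun q => -(Xop i c q)) p = -(Tder (Xop i c) p) := by
      simp [Tder, fderiv_neg]
    rw [this, commTX hc_smooth i p, hTc0]
    show -(fderiv ℝ (fun _ : Heis n => (0:ℝ)) p _) = 0
    simp
end
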